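/- arXiv:2212.01192 — 4 statements merged into one kernel-verified Lean document; each statement's English description precedes it below -/
import Mathlib

section
/- Let (Ω, μ) be a probability space, w : Ω → ℝ^{n_w} a random vector and Z : Ω → ℝ^{n_z × n_z} a random symmetric matrix, with w and Z independent. Assume w_i w_j Z_{kl} Z_{k'l'} is integrable for all indices and let W_{ij} = E[w_i w_j]. Let M_1, …, M_{n_w} ∈ ℝ^{n_x × n_z} and define the sampled operator E_w(ω)(Z) = Σ_{j,ℓ=1}^{n_w} w_j(ω) w_ℓ(ω) M_j Z M_ℓᵀ. Then for all indices k, l, p, q, E[Z_{kl} · (E_w(Z) − E(Z))_{pq}] = 0; that is, the instrumental variable Z is uncorrelated with the temporal-difference model error E_w(Z) − E(Z). -/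
/-!
Expanding the matrix products writes `Z_{kl} (E_w(Z) − E(Z))_{pq}` as the finite sum over `(j, ℓ)`
of `(w_j w_ℓ − E[w_j w_ℓ]) · Z_{kl} (M_j Z M_ℓᵀ)_{pq}`. In each term the second factor is a
function of `Z`, hence independent of the first, so the term has mean
`E[w_j w_ℓ − E[w_j w_ℓ]] · E[Z_{kl} (M_j Z M_ℓᵀ)_{pq}] = 0`.
-/

open Matrix BigOperators MeasureTheory ProbabilityTheory

/-- The canonical (entrywise / pi-type) measurable space on real matrices. -/
instance matrixMeasurableSpace (m n : Type*) : MeasurableSpace (Matrix m n ℝ) :=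
  show MeasurableSpace (m → n → ℝ) from inferInstance

namespace ProbabilityTheory.IndepFun

variable {Ω : Type*} [MeasurableSpace Ω] {μ : Measure Ω} {X Y : Ω → ℝ}

theorem integral_sub_integral_mul [IsProbabilityMeasure μ] (hXY : IndepFun X Y μ)
    (hX : AEStronglyMeasurable X μ) (hY : AEStronglyMeasurable Y μ) :
    ∫ ω, (X ω - ∫ ω', X ω' ∂μ) * Y ω ∂μ = 0 := by
  have hXY' : IndepFun (fun ω => X ω - ∫ ω', X ω' ∂μ) Y μ :=
    hXY.comp (measurable_id.sub_const _) measurable_id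
  rw [hXY'.integral_fun_mul_eq_mul_integral (hX.sub aestronglyMeasurable_const) hY]
  by_cases hXi : Integrable X μ
  · simp [integral_sub hXi (integrable_const _)]
  · -- `X - E[X]` is not integrable either, so its integral is the junk value `0`
    rw [integral_undef fun h =>
      hXi (by simpa using (integrable_add_const_iff (c := ∫ ω', X ω' ∂μ)).mpr h), zero_mul]

theorem integrable_sub_integral_mul (hXY : IndepFun X Y μ) (hX : AEStronglyMeasurable X μ)
    (hY : AEStronglyMeasurable Y μ) (hXYi : Integrable (fun ω => X ω * Y ω) μ) :
    Integrable (fun ω => (X ω - ∫ ω', X ω' ∂μ) * Y ω) μ := by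
  by_cases hX0 : X =ᵐ[μ] 0
  · simpa [integral_eq_zero_of_ae hX0] using hXYi
  · have hYi : Integrable Y μ := hXY.integrable_right_of_integrable_op (· * ·) 1 one_ne_zero
      (fun x y => by simp [enorm_mul]) hXYi hX hY hX0
    simp_rw [sub_mul]
    exact hXYi.sub (hYi.const_mul _)

end ProbabilityTheory.IndepFun

section

variable {Ω : Type*} [MeasurableSpace Ω] {μ : Measure Ω}

theorem integral_sum_sub_integral_mul_eq_zero [IsProbabilityMeasure μ] {ι : Type*}
    (s : Finset ι) {X Y : ι → Ω → ℝ} (hXY : ∀ i ∈ s, IndepFun (X i) (Y i) μ)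
    (hX : ∀ i ∈ s, AEStronglyMeasurable (X i) μ) (hY : ∀ i ∈ s, AEStronglyMeasurable (Y i) μ)
    (hXYi : ∀ i ∈ s, Integrable (fun ω => X i ω * Y i ω) μ) :
    ∫ ω, ∑ i ∈ s, (X i ω - ∫ ω', X i ω' ∂μ) * Y i ω ∂μ = 0 := by
  rw [integral_finsetSum s fun i hi =>
    (hXY i hi).integrable_sub_integral_mul (hX i hi) (hY i hi) (hXYi i hi)]
  exact Finset.sum_eq_zero fun i hi => (hXY i hi).integral_sub_integral_mul (hX i hi) (hY i hi)

theorem Matrix.measurable_mul_mul_apply {m n n' m' : Type*} [Fintype n] [Fintype n']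
    (A : Matrix m n ℝ) (B : Matrix n' m' ℝ) (p : m) (q : m') :
    Measurable fun C : Matrix n n' ℝ => (A * C * B) p q := by
  simp only [mul_apply]
  fun_prop

theorem integrable_mul_mul_mul_apply {m n n' m' : Type*} [Fintype n] [Fintype n'] {g : Ω → ℝ}
    {C : Ω → Matrix n n' ℝ} (A : Matrix m n ℝ) (B : Matrix n' m' ℝ)
    (h : ∀ a b, Integrable (fun ω => g ω * C ω a b) μ) (p : m) (q : m') :
    Integrable (fun ω => g ω * (A * C ω * B) p q) μ := by
  simp only [mul_apply, Finset.mul_sum, Finset.sum_mul]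
  refine integrable_finsetSum _ fun b _ => integrable_finsetSum _ fun a _ => ?_
  simpa only [mul_comm, mul_left_comm, mul_assoc] using (h a b).const_mul (A p a * B b q)

end

theorem iv_uncorrelated_td_error_general {Ω : Type*} [MeasurableSpace Ω]
    (μ : Measure Ω) [IsProbabilityMeasure μ]
    (n_w n_x n_z : ℕ)
    (w : Ω → Fin n_w → ℝ) (Z : Ω → Matrix (Fin n_z) (Fin n_z) ℝ)
    (hw : Measurable w) (hZ : Measurable Z)
    (hindep : IndepFun w Z μ)
    (hint : ∀ (i j : Fin n_w) (k l k' l' : Fin n_z),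
      Integrable (fun ω => w ω i * w ω j * Z ω k l * Z ω k' l') μ)
    (W : Matrix (Fin n_w) (Fin n_w) ℝ)
    (hW : ∀ i j : Fin n_w, W i j = ∫ ω, w ω i * w ω j ∂μ)
    (M : Fin n_w → Matrix (Fin n_x) (Fin n_z) ℝ) :
    ∀ (k l : Fin n_z) (p q : Fin n_x),
      (∫ ω, Z ω k l *
        ((∑ j : Fin n_w, ∑ ℓ : Fin n_w, (w ω j * w ω ℓ) • (M j * Z ω * (M ℓ)ᵀ)) -
         (∑ i : Fin n_w, ∑ j : Fin n_w, W i j • (M i * Z ω * (M j)ᵀ))) p q ∂μ) = 0 := by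
  intro k l p q
  let X (i : Fin n_w × Fin n_w) (ω : Ω) : ℝ := w ω i.1 * w ω i.2
  let Y (i : Fin n_w × Fin n_w) (ω : Ω) : ℝ := Z ω k l * (M i.1 * Z ω * (M i.2)ᵀ) p q
  have hexpand : ∀ ω, Z ω k l *
      ((∑ j : Fin n_w, ∑ ℓ : Fin n_w, (w ω j * w ω ℓ) • (M j * Z ω * (M ℓ)ᵀ)) -
       (∑ i : Fin n_w, ∑ j : Fin n_w, W i j • (M i * Z ω * (M j)ᵀ))) p q
      = ∑ i, (X i ω - ∫ ω', X i ω' ∂μ) * Y i ω := by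
    intro ω
    simp only [X, Y, ← hW, ← Finset.sum_sub_distrib, ← sub_smul, Fintype.sum_prod_type,
      Matrix.sum_apply, Matrix.smul_apply, smul_eq_mul, Finset.mul_sum, mul_left_comm]
  have hf : ∀ i : Fin n_w × Fin n_w, Measurable fun v : Fin n_w → ℝ => v i.1 * v i.2 :=
    fun i => by fun_prop
  have hg : ∀ i : Fin n_w × Fin n_w,
      Measurable fun C : Matrix (Fin n_z) (Fin n_z) ℝ => C k l * (M i.1 * C * (M i.2)ᵀ) p q :=
    fun i => Measurable.mul (by fun_prop) (Matrix.measurable_mul_mul_apply _ _ p q)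
  have hXYi : ∀ i, Integrable (fun ω => X i ω * Y i ω) μ := fun i => by
    simpa only [X, Y, mul_assoc] using integrable_mul_mul_mul_apply
      (g := fun ω => w ω i.1 * w ω i.2 * Z ω k l) (M i.1) (M i.2)ᵀ (hint i.1 i.2 k l) p q
  rw [integral_congr_ae (.of_forall hexpand)]
  exact integral_sum_sub_integral_mul_eq_zero _ (fun i _ => hindep.comp (hf i) (hg i))
    (fun i _ => ((hf i).comp hw).aestronglyMeasurable)
    (fun i _ => ((hg i).comp hZ).aestronglyMeasurable) fun i _ => hXYi i

/-- The instrumental variable `Z` is uncorrelated with the temporal-difference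
model error `E_w(Z) − E(Z)`, when the random vector `w` and the random symmetric
matrix `Z` are independent and `W i j = E[w_i w_j]`. -/
theorem iv_uncorrelated_td_error {Ω : Type*} [MeasurableSpace Ω]
    (μ : Measure Ω) [IsProbabilityMeasure μ]
    (n_w n_x n_z : ℕ)
    (w : Ω → Fin n_w → ℝ) (Z : Ω → Matrix (Fin n_z) (Fin n_z) ℝ)
    (hw : Measurable w) (hZ : Measurable Z)
    (hZsymm : ∀ ω, (Z ω).IsSymm)
    (hindep : IndepFun w Z μ)
    (hint : ∀ (i j : Fin n_w) (k l k' l' : Fin n_z),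
      Integrable (fun ω => w ω i * w ω j * Z ω k l * Z ω k' l') μ)
    (W : Matrix (Fin n_w) (Fin n_w) ℝ)
    (hW : ∀ i j : Fin n_w, W i j = ∫ ω, w ω i * w ω j ∂μ)
    (M : Fin n_w → Matrix (Fin n_x) (Fin n_z) ℝ) :
    ∀ (k l : Fin n_z) (p q : Fin n_x),
      (∫ ω, Z ω k l *
        ((∑ j : Fin n_w, ∑ ℓ : Fin n_w, (w ω j * w ω ℓ) • (M j * Z ω * (M ℓ)ᵀ)) -
         (∑ i : Fin n_w, ∑ j : Fin n_w, W i j • (M i * Z ω * (M j)ᵀ))) p q ∂μ) = 0 :=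
  iv_uncorrelated_td_error_general μ n_w n_x n_z w Z hw hZ hindep hint W hW M
end

section
/- Let X ∈ ℝ^{n_x × n_x} be symmetric positive definite and let M ∈ ℝ^{(n_x+n_u) × (n_x+n_u)} be symmetric with block partition M = [[M_xx, M_uxᵀ], [M_ux, M_uu]] such that M_uu is positive definite. Set K⋆ = −M_uu^{-1} M_ux. If a gain K ∈ ℝ^{n_u × n_x} satisfies tr[X · (M_xx + Kᵀ M_ux + M_uxᵀ K + Kᵀ M_uu K)] = tr[X · (M_xx − M_uxᵀ M_uu^{-1} M_ux)], then K = K⋆; i.e., the minimizer of K ↦ tr[X · L_K M L_Kᵀ] is unique when X is positive definite. -/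
/-!
Completing the square, `L_K M L_Kᵀ = (M_xx - M_uxᵀ M_uu⁻¹ M_ux) + Dᵀ M_uu D` with
`D = K + M_uu⁻¹ M_ux`, so the hypothesis says `tr[X Dᵀ M_uu D] = 0`. The trace of a positive
definite matrix against a positive semidefinite one vanishes only when the latter does, so
`Dᵀ M_uu D = 0`, and positive definiteness of `M_uu` forces `D = 0`.
-/

open Matrix
open scoped ComplexOrder MatrixOrder

namespace Matrix

section PosDef

variable {m n 𝕜 : Type*} [Fintype n] [DecidableEq n] [RCLike 𝕜]

theorem PosDef.conjTranspose_mul_mul_same_eq_zero_iff {A : Matrix n n 𝕜}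
    (hA : A.PosDef) (D : Matrix n m 𝕜) : Dᴴ * A * D = 0 ↔ D = 0 := by
  refine ⟨fun h ↦ ?_, fun h ↦ by simp [h]⟩
  obtain ⟨C, hC, rfl⟩ := CStarAlgebra.isStrictlyPositive_iff_eq_star_mul_self.mp
    hA.isStrictlyPositive
  rw [star_eq_conjTranspose, ← Matrix.mul_assoc, Matrix.mul_assoc, ← conjTranspose_mul,
    conjTranspose_mul_self_eq_zero] at h
  simpa [← Matrix.mul_assoc, nonsing_inv_mul _ ((isUnit_iff_isUnit_det C).mp hC)]
    using congr(C⁻¹ * $h)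

theorem PosDef.trace_mul_eq_zero_iff {A P : Matrix n n 𝕜} (hA : A.PosDef)
    (hP : P.PosSemidef) : (A * P).trace = 0 ↔ P = 0 := by
  refine ⟨fun h ↦ ?_, fun h ↦ by simp [h]⟩
  obtain ⟨B, rfl⟩ := CStarAlgebra.nonneg_iff_eq_star_mul_self.mp hP.nonneg
  rw [star_eq_conjTranspose, ← Matrix.mul_assoc, trace_mul_cycle,
    (hA.posSemidef.mul_mul_conjTranspose_same B).trace_eq_zero_iff] at h
  have hB : Bᴴ = 0 := (hA.conjTranspose_mul_mul_same_eq_zero_iff Bᴴ).mp (by simpa using h)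
  simp [conjTranspose_eq_zero.mp hB]

end PosDef

theorem quadratic_complete_square {m n R : Type*} [Fintype m] [Fintype n] [DecidableEq n]
    [CommRing R] {A : Matrix n n R} (hA : A.IsSymm) (hdet : IsUnit A.det)
    (C : Matrix m m R) (B K : Matrix n m R) :
    C + Kᵀ * B + Bᵀ * K + Kᵀ * A * K =
      C - Bᵀ * A⁻¹ * B + (K + A⁻¹ * B)ᵀ * A * (K + A⁻¹ * B) := by
  have hAinv : (A⁻¹)ᵀ = A⁻¹ := by rw [transpose_nonsing_inv, hA.eq]
  simp only [transpose_add, transpose_mul, hAinv, Matrix.add_mul, Matrix.mul_add,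
    Matrix.mul_assoc, mul_nonsing_inv_cancel_left _ _ hdet, nonsing_inv_mul_cancel_left _ _ hdet]
  abel

end Matrix

theorem trace_quadratic_gain_min_unique_general (n_x n_u : ℕ)
    (X : Matrix (Fin n_x) (Fin n_x) ℝ) (hX : X.PosDef)
    (Mxx : Matrix (Fin n_x) (Fin n_x) ℝ)
    (Mux : Matrix (Fin n_u) (Fin n_x) ℝ)
    (Muu : Matrix (Fin n_u) (Fin n_u) ℝ) (hMuu : Muu.PosDef)
    (K : Matrix (Fin n_u) (Fin n_x) ℝ)
    (hK : (X * (Mxx + Kᵀ * Mux + Muxᵀ * K + Kᵀ * Muu * K)).trace =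
      (X * (Mxx - Muxᵀ * Muu⁻¹ * Mux)).trace) :
    K = -(Muu⁻¹ * Mux) := by
  set D := K + Muu⁻¹ * Mux
  rw [quadratic_complete_square (isHermitian_iff_isSymm.mp hMuu.isHermitian)
    (isUnit_iff_ne_zero.mpr hMuu.det_pos.ne'), Matrix.mul_add, trace_add, add_eq_left] at hK
  have hDMD : Dᴴ * Muu * D = 0 :=
    (hX.trace_mul_eq_zero_iff (hMuu.posSemidef.conjTranspose_mul_mul_same D)).mp <| by
      rwa [conjTranspose_eq_transpose_of_trivial]
  have hD : D = 0 := (hMuu.conjTranspose_mul_mul_same_eq_zero_iff D).mp hDMD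
  exact eq_neg_of_add_eq_zero_left hD

/-- When `X ≻ 0`, the minimizer of `K ↦ tr[X * (M_xx + Kᵀ M_ux + M_uxᵀ K + Kᵀ M_uu K)]`
is unique: any `K` achieving the minimum value `tr[X * (M_xx − M_uxᵀ M_uu⁻¹ M_ux)]`
equals `K⋆ = −M_uu⁻¹ M_ux`. -/
theorem trace_quadratic_gain_min_unique (n_x n_u : ℕ)
    (X : Matrix (Fin n_x) (Fin n_x) ℝ) (hX : X.PosDef)
    (Mxx : Matrix (Fin n_x) (Fin n_x) ℝ) (hMxx : Mxx.IsSymm)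
    (Mux : Matrix (Fin n_u) (Fin n_x) ℝ)
    (Muu : Matrix (Fin n_u) (Fin n_u) ℝ) (hMuu : Muu.PosDef)
    (K : Matrix (Fin n_u) (Fin n_x) ℝ)
    (hK : (X * (Mxx + Kᵀ * Mux + Muxᵀ * K + Kᵀ * Muu * K)).trace =
      (X * (Mxx - Muxᵀ * Muu⁻¹ * Mux)).trace) :
    K = -(Muu⁻¹ * Mux) :=
  trace_quadratic_gain_min_unique_general n_x n_u X hX Mxx Mux Muu hMuu K hK
end

section
/- Let M_1, …, M_{n_w} ∈ ℝ^{n_x × n_z} with n_z = n_x + n_u, W ∈ ℝ^{n_w × n_w} symmetric, E and E* as defined, K ∈ ℝ^{n_u × n_x} a gain with L_K = [I, Kᵀ] and policy map π_K(X) = L_Kᵀ X L_K, and let H ∈ ℝ^{n_z × n_z} and P ∈ ℝ^{n_x × n_x} be symmetric. Then the following are equivalent: (i) tr[X P] = tr[π_K(X) H] + tr[P · E(π_K(X))] for every symmetric X ∈ ℝ^{n_x × n_x}; (ii) P = L_K (H + E*(P)) L_Kᵀ. That is, the fixed-point condition J_π = T_π J_π for the linear value function J_π(X) = tr[P X] is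 equivalent to the generalized Lyapunov equation P = π_K*(H + E*(P)). -/
/-!
For the trace pairing `⟨X, Y⟩ = tr[X Y]`, `π_K` has adjoint `Y ↦ L_K Y L_Kᵀ` and, as `W` is
symmetric, `E` has adjoint `E*`. Hence the right-hand side of the Bellman identity is
`tr[X Q]` with `Q = L_K (H + E*(P)) L_Kᵀ`, and two symmetric matrices with the same pairing
against every symmetric `X` coincide (take `X = P - Q`).
-/

open Matrix BigOperators

/-- The completely positive operator `E(Z) = Σ_{i,j} W i j • M i * Z * (M j)ᵀ`. -/
def cpE {n_w n_x n_u : ℕ} (W : Matrix (Fin n_w) (Fin n_w) ℝ)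
    (M : Fin n_w → Matrix (Fin n_x) (Fin n_x ⊕ Fin n_u) ℝ)
    (Z : Matrix (Fin n_x ⊕ Fin n_u) (Fin n_x ⊕ Fin n_u) ℝ) :
    Matrix (Fin n_x) (Fin n_x) ℝ :=
  ∑ i : Fin n_w, ∑ j : Fin n_w, W i j • (M i * Z * (M j)ᵀ)

/-- Its adjoint `E*(P) = Σ_{i,j} W i j • (M i)ᵀ * P * M j`. -/
def cpEstar {n_w n_x n_u : ℕ} (W : Matrix (Fin n_w) (Fin n_w) ℝ)
    (M : Fin n_w → Matrix (Fin n_x) (Fin n_x ⊕ Fin n_u) ℝ)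
    (P : Matrix (Fin n_x) (Fin n_x) ℝ) :
    Matrix (Fin n_x ⊕ Fin n_u) (Fin n_x ⊕ Fin n_u) ℝ :=
  ∑ i : Fin n_w, ∑ j : Fin n_w, W i j • ((M i)ᵀ * P * M j)

/-- The matrix `L_K = [I, Kᵀ]` associated with a gain `K`. -/
def gainL {n_x n_u : ℕ} (K : Matrix (Fin n_u) (Fin n_x) ℝ) :
    Matrix (Fin n_x) (Fin n_x ⊕ Fin n_u) ℝ :=
  Matrix.fromCols 1 Kᵀ

/-- The policy map `π_K(X) = L_Kᵀ X L_K`. -/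
def policy {n_x n_u : ℕ} (K : Matrix (Fin n_u) (Fin n_x) ℝ)
    (X : Matrix (Fin n_x) (Fin n_x) ℝ) :
    Matrix (Fin n_x ⊕ Fin n_u) (Fin n_x ⊕ Fin n_u) ℝ :=
  (gainL K)ᵀ * X * gainL K

namespace Matrix

variable {m n R : Type*} [Fintype n]

theorem IsSymm.mul_mul_transpose [CommSemiring R] {A : Matrix n n R} (hA : A.IsSymm)
    (B : Matrix m n R) : (B * A * Bᵀ).IsSymm := by
  rw [IsSymm, transpose_mul, transpose_mul, transpose_transpose, hA.eq, Matrix.mul_assoc]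

theorem trace_transpose_mul_mul_mul_eq [Fintype m] [CommSemiring R] (L : Matrix m n R)
    (X : Matrix m m R) (A : Matrix n n R) :
    (Lᵀ * X * L * A).trace = (X * (L * A * Lᵀ)).trace := by
  rw [Matrix.mul_assoc _ L, trace_mul_cycle, trace_mul_comm]

theorem IsSymm.eq_of_forall_trace_mul_eq {P Q : Matrix n n ℝ} (hP : P.IsSymm) (hQ : Q.IsSymm)
    (h : ∀ X : Matrix n n ℝ, X.IsSymm → (X * P).trace = (X * Q).trace) : P = Q := by
  have hPQ := hP.sub hQ
  have : ((P - Q)ᴴ * (P - Q)).trace = 0 := by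
    rw [conjTranspose_eq_transpose_of_trivial, hPQ.eq, Matrix.mul_sub, trace_sub,
      h _ hPQ, sub_self]
  exact sub_eq_zero.mp (trace_conjTranspose_mul_self_eq_zero_iff.mp this)

end Matrix

section

variable {n_w n_x n_u : ℕ} (W : Matrix (Fin n_w) (Fin n_w) ℝ)
  (M : Fin n_w → Matrix (Fin n_x) (Fin n_x ⊕ Fin n_u) ℝ)

theorem trace_mul_cpE (hW : W.IsSymm) (P : Matrix (Fin n_x) (Fin n_x) ℝ)
    (Z : Matrix (Fin n_x ⊕ Fin n_u) (Fin n_x ⊕ Fin n_u) ℝ) :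
    (P * cpE W M Z).trace = (cpEstar W M P * Z).trace := by
  simp only [cpE, cpEstar, Matrix.mul_sum, Matrix.sum_mul, Matrix.mul_smul, Matrix.smul_mul,
    trace_sum, trace_smul, smul_eq_mul]
  rw [Finset.sum_comm]
  refine Finset.sum_congr rfl fun i _ => Finset.sum_congr rfl fun j _ => ?_
  rw [hW.apply i j, ← Matrix.mul_assoc, trace_mul_cycle]
  simp only [Matrix.mul_assoc]

theorem isSymm_cpEstar (hW : W.IsSymm) {P : Matrix (Fin n_x) (Fin n_x) ℝ} (hP : P.IsSymm) :
    (cpEstar W M P).IsSymm := by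
  rw [IsSymm, cpEstar, transpose_sum, Finset.sum_comm]
  refine Finset.sum_congr rfl fun i _ => ?_
  rw [transpose_sum]
  refine Finset.sum_congr rfl fun j _ => ?_
  rw [transpose_smul, transpose_mul, transpose_mul, transpose_transpose, hP.eq, hW.apply i j,
    Matrix.mul_assoc]

end

/-- The fixed-point condition `J_π = T_π J_π` for the linear value function
`J_π(X) = tr[P X]` is equivalent to the generalized Lyapunov equation
`P = L_K (H + E*(P)) L_Kᵀ`. -/
theorem lyapunov_iff_bellman_fixed_point (n_w n_x n_u : ℕ)
    (W : Matrix (Fin n_w) (Fin n_w) ℝ) (hW : W.IsSymm)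
    (M : Fin n_w → Matrix (Fin n_x) (Fin n_x ⊕ Fin n_u) ℝ)
    (K : Matrix (Fin n_u) (Fin n_x) ℝ)
    (H : Matrix (Fin n_x ⊕ Fin n_u) (Fin n_x ⊕ Fin n_u) ℝ) (hH : H.IsSymm)
    (P : Matrix (Fin n_x) (Fin n_x) ℝ) (hP : P.IsSymm) :
    (∀ X : Matrix (Fin n_x) (Fin n_x) ℝ, X.IsSymm →
        (X * P).trace = (policy K X * H).trace + (P * cpE W M (policy K X)).trace) ↔
      P = gainL K * (H + cpEstar W M P) * (gainL K)ᵀ := by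
  set Q := gainL K * (H + cpEstar W M P) * (gainL K)ᵀ
  have hQ : Q.IsSymm := (hH.add (isSymm_cpEstar W M hW hP)).mul_mul_transpose _
  have bellman_rhs : ∀ X : Matrix (Fin n_x) (Fin n_x) ℝ,
      (policy K X * H).trace + (P * cpE W M (policy K X)).trace = (X * Q).trace := by
    intro X
    rw [trace_mul_cpE W M hW, trace_mul_comm (cpEstar W M P), ← trace_add, ← Matrix.mul_add,
      policy, trace_transpose_mul_mul_mul_eq]
  simp only [bellman_rhs]
  exact ⟨hP.eq_of_forall_trace_mul_eq hQ, fun h X _ => by rw [← h]⟩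
end

section
/- Let M_1, …, M_{n_w} ∈ ℝ^{n_x × n_z} with n_z = n_x + n_u, W ∈ ℝ^{n_w × n_w} symmetric, E* as defined, Q ∈ ℝ^{n_x × n_x} and R ∈ ℝ^{n_u × n_u} symmetric, and H = diag(Q, R) ∈ ℝ^{n_z × n_z}. Suppose P ∈ ℝ^{n_x × n_x} is symmetric, let M = H + E*(P) with block partition M = [[M_xx, M_uxᵀ], [M_ux, M_uu]] (so M_uu = R + E*(P)_uu and M_ux = E*(P)_ux), assume M_uu is positive definite, and suppose P satisfies the generalized Riccati equation P = M_xx − M_uxᵀ M_uu^{-1} M_ux (i.e. P = Q + E*(P)_xx − E*(P)_uxᵀ (R + E*(P)_uu)^{-1} E*(P)_ux). Then for every symmetric positive semidefinite X ∈ ℝ^{n_x × n_x} and every gain K ∈ ℝ^{n_u × n_x}, tr[X · L_K M L_Kᵀ] ≥ tr[X P], with equality for K⋆ = −M_uu^{-1} M_ux = −(R + E*(P)_uu)^{-1} E*(P)_ux; i.e., J(X) = tr[X P] satisfies the Bellman equation J = T J with optimal gain K⋆. -/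
open Matrix BigOperators

/-! Symmetry of `E*(P)` makes `M = H + E*(P)` the block matrix `[[M_xx, M_uxᵀ], [M_ux, M_uu]]`,
so completing the square and the Riccati equation give
`L_K M L_Kᵀ = P + (K - K⋆)ᵀ M_uu (K - K⋆)`. The trace of a product of two positive semidefinite
matrices is nonnegative, hence `tr[X L_K M L_Kᵀ] ≥ tr[X P]`, with equality at `K = K⋆`. -/

open scoped ComplexOrder in
lemma Matrix.PosSemidef.trace_mul_nonneg {n 𝕜 : Type*} [Fintype n] [RCLike 𝕜]
    {X D : Matrix n n 𝕜} (hX : X.PosSemidef) (hD : D.PosSemidef) : 0 ≤ (X * D).trace := by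
  classical
  obtain ⟨S, rfl⟩ : ∃ S : Matrix n n 𝕜, X = star S * S := by
    open scoped MatrixOrder Matrix.Norms.L2Operator in
    exact CStarAlgebra.nonneg_iff_eq_star_mul_self.mp hX.nonneg
  rw [Matrix.mul_assoc, trace_mul_comm]
  exact (hD.mul_mul_conjTranspose_same S).trace_nonneg

lemma fromCols_one_mul_fromBlocks_mul_fromRows_one {m n R : Type*} [Fintype m] [Fintype n]
    [DecidableEq m] [DecidableEq n] [CommRing R]
    (A : Matrix m m R) (B : Matrix n m R) {C : Matrix n n R} (hC : IsUnit C.det)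
    (hCsymm : C.IsSymm) (K : Matrix n m R) :
    Matrix.fromCols (1 : Matrix m m R) Kᵀ * fromBlocks A Bᵀ B C *
        Matrix.fromRows (1 : Matrix m m R) K =
      (A - Bᵀ * C⁻¹ * B) + (K + C⁻¹ * B)ᵀ * C * (K + C⁻¹ * B) := by
  have hCinvT : C⁻¹ᵀ = C⁻¹ := by rw [transpose_nonsing_inv, hCsymm.eq]
  rw [fromCols_mul_fromBlocks, Matrix.fromCols_mul_fromRows, transpose_add, transpose_mul, hCinvT]
  simp only [Matrix.one_mul, Matrix.mul_one, Matrix.add_mul, Matrix.mul_add, Matrix.mul_assoc,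
    mul_nonsing_inv_cancel_left _ _ hC, nonsing_inv_mul_cancel_left _ _ hC]
  abel

lemma gainL_transpose {n_x n_u : ℕ} (K : Matrix (Fin n_u) (Fin n_x) ℝ) :
    (gainL K)ᵀ = Matrix.fromRows 1 K := by
  rw [gainL, transpose_fromCols, transpose_one, transpose_transpose]

lemma cpEstar_isSymm {n_w n_x n_u : ℕ} {W : Matrix (Fin n_w) (Fin n_w) ℝ} (hW : W.IsSymm)
    (M : Fin n_w → Matrix (Fin n_x) (Fin n_x ⊕ Fin n_u) ℝ) {P : Matrix (Fin n_x) (Fin n_x) ℝ}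
    (hP : P.IsSymm) : (cpEstar W M P).IsSymm := by
  rw [IsSymm, cpEstar, transpose_sum, Finset.sum_comm]
  refine Finset.sum_congr rfl fun i _ => ?_
  rw [transpose_sum]
  refine Finset.sum_congr rfl fun j _ => ?_
  rw [transpose_smul, transpose_mul, transpose_mul, transpose_transpose, hP.eq, hW.apply,
    Matrix.mul_assoc]

lemma toBlocks₁₂_fromBlocks_add_eq_transpose_toBlocks₂₁ {m n R : Type*} [AddCommMonoid R]
    (A : Matrix m m R) (D : Matrix n n R) {S : Matrix (m ⊕ n) (m ⊕ n) R} (hS : S.IsSymm) :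
    (fromBlocks A 0 0 D + S).toBlocks₁₂ = (fromBlocks A 0 0 D + S).toBlocks₂₁ᵀ := by
  ext i j
  simpa [toBlocks₁₂, toBlocks₂₁] using hS.apply (Sum.inr j) (Sum.inl i)

theorem riccati_implies_bellman_general (n_w n_x n_u : ℕ)
    (W : Matrix (Fin n_w) (Fin n_w) ℝ) (hW : W.IsSymm)
    (M : Fin n_w → Matrix (Fin n_x) (Fin n_x ⊕ Fin n_u) ℝ)
    (Q : Matrix (Fin n_x) (Fin n_x) ℝ)
    (R : Matrix (Fin n_u) (Fin n_u) ℝ)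
    (H : Matrix (Fin n_x ⊕ Fin n_u) (Fin n_x ⊕ Fin n_u) ℝ)
    (hH : H = Matrix.fromBlocks Q 0 0 R)
    (P : Matrix (Fin n_x) (Fin n_x) ℝ) (hP : P.IsSymm)
    (Mfull : Matrix (Fin n_x ⊕ Fin n_u) (Fin n_x ⊕ Fin n_u) ℝ)
    (hMfull : Mfull = H + cpEstar W M P)
    (hMuu : Mfull.toBlocks₂₂.PosDef)
    (hRic : P = Mfull.toBlocks₁₁ -
      (Mfull.toBlocks₂₁)ᵀ * (Mfull.toBlocks₂₂)⁻¹ * Mfull.toBlocks₂₁) :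
    ∀ X : Matrix (Fin n_x) (Fin n_x) ℝ, X.PosSemidef →
      (∀ K : Matrix (Fin n_u) (Fin n_x) ℝ,
          (X * (gainL K * Mfull * (gainL K)ᵀ)).trace ≥ (X * P).trace) ∧
        (X * (gainL (-((Mfull.toBlocks₂₂)⁻¹ * Mfull.toBlocks₂₁)) * Mfull *
              (gainL (-((Mfull.toBlocks₂₂)⁻¹ * Mfull.toBlocks₂₁)))ᵀ)).trace =
          (X * P).trace := by
  have h12 : Mfull.toBlocks₁₂ = Mfull.toBlocks₂₁ᵀ := by
    rw [hMfull, hH]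
    exact toBlocks₁₂_fromBlocks_add_eq_transpose_toBlocks₂₁ Q R (cpEstar_isSymm hW M hP)
  have hblocks := (fromBlocks_toBlocks Mfull).symm
  rw [h12] at hblocks
  set C := Mfull.toBlocks₂₂
  set B := Mfull.toBlocks₂₁
  have hC : IsUnit C.det := hMuu.isUnit.map detMonoidHom
  have hCsymm : C.IsSymm := by simpa using hMuu.isHermitian
  have hsquare : ∀ K,
      gainL K * Mfull * (gainL K)ᵀ = P + (K + C⁻¹ * B)ᵀ * C * (K + C⁻¹ * B) := by
    intro K
    rw [hRic, gainL_transpose, gainL, hblocks]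
    exact fromCols_one_mul_fromBlocks_mul_fromRows_one _ B hC hCsymm K
  intro X hX
  refine ⟨fun K => ?_, by simp [hsquare]⟩
  have hgap := hX.trace_mul_nonneg (hMuu.posSemidef.conjTranspose_mul_mul_same (K + C⁻¹ * B))
  rw [conjTranspose_eq_transpose_of_trivial] at hgap
  rw [hsquare, Matrix.mul_add, trace_add]
  linarith

/-- If `P` solves the generalized Riccati equation
`P = M_xx − M_uxᵀ M_uu⁻¹ M_ux` with `M = H + E*(P)`, `H = diag(Q, R)` and
`M_uu ≻ 0`, then `J(X) = tr[X P]` satisfies the Bellman equation: for every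
`X ⪰ 0` the cost `tr[X · L_K M L_Kᵀ]` is minimized over gains `K` with minimum
value `tr[X P]`, attained at `K⋆ = −M_uu⁻¹ M_ux`. -/
theorem riccati_implies_bellman (n_w n_x n_u : ℕ)
    (W : Matrix (Fin n_w) (Fin n_w) ℝ) (hW : W.IsSymm)
    (M : Fin n_w → Matrix (Fin n_x) (Fin n_x ⊕ Fin n_u) ℝ)
    (Q : Matrix (Fin n_x) (Fin n_x) ℝ) (hQ : Q.IsSymm)
    (R : Matrix (Fin n_u) (Fin n_u) ℝ) (hR : R.IsSymm)
    (H : Matrix (Fin n_x ⊕ Fin n_u) (Fin n_x ⊕ Fin n_u) ℝ)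
    (hH : H = Matrix.fromBlocks Q 0 0 R)
    (P : Matrix (Fin n_x) (Fin n_x) ℝ) (hP : P.IsSymm)
    (Mfull : Matrix (Fin n_x ⊕ Fin n_u) (Fin n_x ⊕ Fin n_u) ℝ)
    (hMfull : Mfull = H + cpEstar W M P)
    (hMuu : Mfull.toBlocks₂₂.PosDef)
    (hRic : P = Mfull.toBlocks₁₁ -
      (Mfull.toBlocks₂₁)ᵀ * (Mfull.toBlocks₂₂)⁻¹ * Mfull.toBlocks₂₁) :
    ∀ X : Matrix (Fin n_x) (Fin n_x) ℝ, X.PosSemidef →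
      (∀ K : Matrix (Fin n_u) (Fin n_x) ℝ,
          (X * (gainL K * Mfull * (gainL K)ᵀ)).trace ≥ (X * P).trace) ∧
        (X * (gainL (-((Mfull.toBlocks₂₂)⁻¹ * Mfull.toBlocks₂₁)) * Mfull *
              (gainL (-((Mfull.toBlocks₂₂)⁻¹ * Mfull.toBlocks₂₁)))ᵀ)).trace =
          (X * P).trace :=
  riccati_implies_bellman_general n_w n_x n_u W hW M Q R H hH P hP Mfull hMfull hMuu hRic
end
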